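/- Correctness of the vertex-cover-to-DAGREACH gadget: given a graph G on n vertices and integer k, construct the DAG consisting of (1) a fixed path from s to t₁ whose yield is 1^k 0^{n−k} #, (2) a fixed path from t₁ to t₂ whose yield encodes the adjacency matrix of G followed by #, and (3) a sequence of n diamond gadgets from t₂ to t, where the i-th diamond offers two parallel paths with yields '1#' and '0#' respectively. Then G has a vertex cover of size at most k if and only if some directed path from s to t has yield in the language A of the previous statement. -/

import Mathlib

/-!
A path from the source to the sink of the gadget spells the fixed prefix followed by one block
`c #` per diamond, so its yields are exactly the words `enc n k G b` for `b : Fin n → Bool`.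
The separators `#` cut such a word uniquely into `1^k 0^(n-k)`, the matrix code and the bits, and
the matrix code determines every entry above the diagonal, which for a simple graph determines `G`.
Hence `enc n k G b ∈ A` says precisely that `b` is the indicator of a vertex cover of size `≤ k`.
-/

inductive LabReaches {V α : Type*} (E : V → α → V → Prop) : V → List α → V → Prop
  | nil (v : V) : LabReaches E v [] v
  | cons {u v w : V} {a : α} {l : List α} :
      E u a v → LabReaches E v l w → LabReaches E u (a :: l) w

inductive Sym3 : Type
  | zero | one | sep
deriving DecidableEq

def bitSym : Bool → Sym3
  | false => Sym3.zero
  | true => Sym3.one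

def matEnc (n : ℕ) (adj : Fin n → Fin n → Bool) : List Sym3 :=
  (List.finRange n).flatMap fun i =>
    (List.finRange n).filterMap fun j => if i < j then some (bitSym (adj i j)) else none

def enc (n k : ℕ) (adj : Fin n → Fin n → Bool) (b : Fin n → Bool) : List Sym3 :=
  List.replicate k Sym3.one ++ List.replicate (n - k) Sym3.zero ++ [Sym3.sep] ++
    matEnc n adj ++ [Sym3.sep] ++
    (List.finRange n).flatMap (fun i => [bitSym (b i), Sym3.sep])

/-- The vertex-cover verification language `A`. -/
def A : Set (List Sym3) :=
  {w | ∃ (n k : ℕ) (adj : Fin n → Fin n → Bool) (b : Fin n → Bool),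
    w = enc n k adj b ∧
    (Finset.univ.filter fun i => b i = true).card ≤ k ∧
    ∀ i j, adj i j = true → b i = true ∨ b j = true}

/-- The fixed prefix `1^k 0^{n-k} # m #` of the gadget. -/
def prefixStr (n k : ℕ) (adj : Fin n → Fin n → Bool) : List Sym3 :=
  List.replicate k Sym3.one ++ List.replicate (n - k) Sym3.zero ++ [Sym3.sep] ++
    matEnc n adj ++ [Sym3.sep]

/-- The gadget DAG: a fixed path spelling the prefix `p` on vertices
`inl 0, …, inl p.length`, followed by `n` diamond gadgets; the `j`-th diamond goes from
`inl (p.length + j)` to `inl (p.length + j + 1)` and offers two internally disjoint paths,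
through `inr (j,true)` with yield `1#` and through `inr (j,false)` with yield `0#`. -/
def gadgetE (p : List Sym3) (n : ℕ) :
    (ℕ ⊕ (ℕ × Bool)) → Sym3 → (ℕ ⊕ (ℕ × Bool)) → Prop := fun x a y =>
  (∃ i, i < p.length ∧ x = Sum.inl i ∧ y = Sum.inl (i + 1) ∧ p[i]? = some a) ∨
  (∃ j c, j < n ∧ x = Sum.inl (p.length + j) ∧ y = Sum.inr (j, c) ∧ a = bitSym c) ∨
  (∃ j c, j < n ∧ x = Sum.inr (j, c) ∧ y = Sum.inl (p.length + j + 1) ∧ a = Sym3.sep)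

theorem List.append_cons_inj_of_notMem_left {α : Type*} {x₁ x₂ z₁ z₂ : List α} {a : α}
    (h₁ : a ∉ x₁) (h₂ : a ∉ x₂) (h : x₁ ++ a :: z₁ = x₂ ++ a :: z₂) : x₁ = x₂ ∧ z₁ = z₂ := by
  simp only [List.append_eq_append_iff, List.cons_eq_append_iff] at h
  rcases h with ⟨c, rfl, ⟨rfl, h⟩ | ⟨d, rfl, h⟩⟩ | ⟨c, rfl, ⟨rfl, h⟩ | ⟨d, rfl, h⟩⟩ <;> simp_all

theorem LabReaches.append {V α : Type*} {E : V → α → V → Prop} {u v w : V} {l l' : List α}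
    (h : LabReaches E u l v) (h' : LabReaches E v l' w) : LabReaches E u (l ++ l') w := by
  induction h with
  | nil => exact h'
  | cons e _ ih => exact .cons e (ih h')

theorem bitSym_injective : Function.Injective bitSym := by decide

theorem bitSym_ne_sep (c : Bool) : bitSym c ≠ Sym3.sep := by cases c <;> decide

def bitsWord (bs : List Bool) : List Sym3 :=
  bs.flatMap fun c => [bitSym c, Sym3.sep]

@[simp]
theorem bitsWord_nil : bitsWord [] = [] := rfl

@[simp]
theorem bitsWord_cons (c : Bool) (bs : List Bool) :
    bitsWord (c :: bs) = bitSym c :: Sym3.sep :: bitsWord bs := rfl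

theorem bitsWord_injective : Function.Injective bitsWord := by
  intro bs bs' h
  induction bs generalizing bs' with
  | nil => cases bs' <;> simp_all
  | cons c bs ih =>
    cases bs' with
    | nil => simp at h
    | cons c' bs' =>
      simp only [bitsWord_cons, List.cons.injEq, true_and] at h
      rw [bitSym_injective h.1, ih h.2]

theorem enc_eq_prefixStr_append (n k : ℕ) (adj : Fin n → Fin n → Bool) (b : Fin n → Bool) :
    enc n k adj b = prefixStr n k adj ++ bitsWord (List.ofFn b) := by
  simp [enc, prefixStr, bitsWord, List.ofFn_eq_map, List.flatMap_map]

def upperPairs (n : ℕ) : List (Fin n × Fin n) :=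
  (List.finRange n).flatMap fun i =>
    (List.finRange n).filterMap fun j => if i < j then some (i, j) else none

theorem mem_upperPairs {n : ℕ} {q : Fin n × Fin n} : q ∈ upperPairs n ↔ q.1 < q.2 := by
  obtain ⟨i, j⟩ := q
  simp [upperPairs]

theorem matEnc_eq_map (n : ℕ) (adj : Fin n → Fin n → Bool) :
    matEnc n adj = (upperPairs n).map fun q => bitSym (adj q.1 q.2) := by
  simp only [matEnc, upperPairs, List.map_flatMap, List.map_filterMap]
  congr! 3 with i _ j
  split_ifs <;> rfl

theorem eq_of_matEnc_eq {n : ℕ} {adj adj' : Fin n → Fin n → Bool}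
    (h : matEnc n adj = matEnc n adj') {i j : Fin n} (hij : i < j) : adj i j = adj' i j := by
  rw [matEnc_eq_map, matEnc_eq_map, List.map_inj_left] at h
  exact bitSym_injective (h (i, j) (mem_upperPairs.2 hij))

theorem sep_notMem_matEnc (n : ℕ) (adj : Fin n → Fin n → Bool) : Sym3.sep ∉ matEnc n adj := by
  simp [matEnc_eq_map, bitSym_ne_sep]

theorem enc_eq_append_sep (n k : ℕ) (adj : Fin n → Fin n → Bool) (b : Fin n → Bool) :
    enc n k adj b = (List.replicate k Sym3.one ++ List.replicate (n - k) Sym3.zero) ++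
      Sym3.sep :: (matEnc n adj ++ Sym3.sep :: bitsWord (List.ofFn b)) := by
  simp [enc_eq_prefixStr_append, prefixStr]

theorem enc_inj {n n' k k' : ℕ} {adj : Fin n → Fin n → Bool} {adj' : Fin n' → Fin n' → Bool}
    {b : Fin n → Bool} {b' : Fin n' → Bool} (h : enc n k adj b = enc n' k' adj' b') :
    n = n' ∧ k = k' ∧ matEnc n adj = matEnc n' adj' ∧ List.ofFn b = List.ofFn b' := by
  rw [enc_eq_append_sep, enc_eq_append_sep] at h
  obtain ⟨hblock, hrest⟩ := List.append_cons_inj_of_notMem_left (by simp) (by simp) h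
  obtain ⟨hmat, hbits⟩ := List.append_cons_inj_of_notMem_left
    (sep_notMem_matEnc _ _) (sep_notMem_matEnc _ _) hrest
  have hb := bitsWord_injective hbits
  have hk : k = k' := by simpa [List.count_replicate] using congrArg (List.count Sym3.one) hblock
  have hn : n = n' := by simpa using congrArg List.length hb
  exact ⟨hn, hk, hmat, hb⟩

theorem enc_mem_A_iff {n k : ℕ} (G : SimpleGraph (Fin n)) [DecidableRel G.Adj] (b : Fin n → Bool) :
    enc n k (fun i j => decide (G.Adj i j)) b ∈ A ↔
      (Finset.univ.filter fun i => b i = true).card ≤ k ∧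
        ∀ i j, G.Adj i j → b i = true ∨ b j = true := by
  constructor
  · rintro ⟨n', k', adj', b', h, hcard, hcov⟩
    obtain ⟨rfl, rfl, hmat, hb⟩ := enc_inj h
    obtain rfl := List.ofFn_injective hb
    refine ⟨hcard, fun i j hij => ?_⟩
    rcases lt_or_gt_of_ne hij.ne with hlt | hlt
    · exact hcov i j (by simpa [← eq_of_matEnc_eq hmat hlt])
    · exact (hcov j i (by simpa [← eq_of_matEnc_eq hmat hlt] using hij.symm)).symm
  · rintro ⟨hcard, hcov⟩
    exact ⟨n, k, _, b, rfl, hcard, fun i j hij => hcov i j (of_decide_eq_true hij)⟩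

section Gadget

variable (p : List Sym3) (n : ℕ)

theorem gadgetE_reaches_drop {i : ℕ} (hi : i ≤ p.length) :
    LabReaches (gadgetE p n) (.inl i) (p.drop i) (.inl p.length) := by
  induction hi using Nat.decreasingInduction with
  | self => simpa using LabReaches.nil _
  | of_succ i hi ih =>
    rw [List.drop_eq_getElem_cons hi]
    exact .cons (Or.inl ⟨i, hi, rfl, rfl, List.getElem?_eq_getElem hi⟩) ih

theorem gadgetE_reaches_bitsWord {j : ℕ} (bs : List Bool) (h : j + bs.length = n) :
    LabReaches (gadgetE p n) (.inl (p.length + j)) (bitsWord bs) (.inl (p.length + n)) := by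
  induction bs generalizing j with
  | nil => simpa [← h] using LabReaches.nil _
  | cons c bs ih =>
    rw [List.length_cons] at h
    have hj : j < n := by omega
    exact .cons (Or.inr (Or.inl ⟨j, c, hj, rfl, rfl, rfl⟩))
      (.cons (Or.inr (Or.inr ⟨j, c, hj, rfl, rfl, rfl⟩)) (ih (j := j + 1) (by omega)))

/-- The words spelled by paths from a vertex to the sink: the rest of the prefix, then one block
`c #` for each diamond still ahead (on the prefix path `i - p.length` truncates to `0`). -/
def GadgetTail : ℕ ⊕ (ℕ × Bool) → List Sym3 → Prop
  | .inl i, w => ∃ bs : List Bool, i - p.length + bs.length = n ∧ w = p.drop i ++ bitsWord bs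
  | .inr (j, _), w => ∃ bs : List Bool, j + 1 + bs.length = n ∧ w = Sym3.sep :: bitsWord bs

variable {p n}

theorem gadgetTail_of_reaches {v : ℕ ⊕ (ℕ × Bool)} {w : List Sym3}
    (h : LabReaches (gadgetE p n) v w (.inl (p.length + n))) : GadgetTail p n v w := by
  generalize ht : (Sum.inl (p.length + n) : ℕ ⊕ (ℕ × Bool)) = t at h
  induction h with
  | nil => subst ht; exact ⟨[], by simp⟩
  | cons e _ ih =>
    rcases e with ⟨i, hi, rfl, rfl, hpi⟩ | ⟨j, c, hj, rfl, rfl, rfl⟩ | ⟨j, c, hj, rfl, rfl, rfl⟩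
    · obtain ⟨bs, hlen, rfl⟩ := ih ht
      refine ⟨bs, by omega, ?_⟩
      rw [List.drop_eq_getElem_cons hi, (List.getElem?_eq_some_iff.1 hpi).2]
      rfl
    · obtain ⟨bs, hlen, rfl⟩ := ih ht
      exact ⟨c :: bs, by rw [List.length_cons]; omega, by simp⟩
    · obtain ⟨bs, hlen, rfl⟩ := ih ht
      exact ⟨bs, by omega, by rw [List.drop_eq_nil_of_le (by omega)]; rfl⟩

theorem gadgetE_reaches_iff {w : List Sym3} :
    LabReaches (gadgetE p n) (.inl 0) w (.inl (p.length + n)) ↔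
      ∃ b : Fin n → Bool, w = p ++ bitsWord (List.ofFn b) := by
  constructor
  · intro h
    obtain ⟨bs, hlen, rfl⟩ := gadgetTail_of_reaches h
    obtain rfl : bs.length = n := by simpa using hlen
    exact ⟨fun i => bs[i], by simp⟩
  · rintro ⟨b, rfl⟩
    refine (gadgetE_reaches_drop p n (Nat.zero_le _)).append ?_
    simpa using gadgetE_reaches_bitsWord p n (j := 0) (List.ofFn b) (by simp)

end Gadget

/-- Correctness of the vertex-cover-to-DAGREACH gadget: `G` has a vertex cover of size
at most `k` iff some directed path from `s` to `t` in the gadget DAG has yield in `A`. -/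
theorem stmt12 (n k : ℕ) (G : SimpleGraph (Fin n)) [DecidableRel G.Adj] :
    (∃ S : Finset (Fin n), S.card ≤ k ∧ ∀ i j, G.Adj i j → i ∈ S ∨ j ∈ S) ↔
      ∃ w ∈ A, LabReaches (gadgetE (prefixStr n k fun i j => decide (G.Adj i j)) n)
        (Sum.inl 0)
        w
        (Sum.inl ((prefixStr n k fun i j => decide (G.Adj i j)).length + n)) := by
  simp only [gadgetE_reaches_iff, ← enc_eq_prefixStr_append, ← exists_and_left,
    exists_comm (α := List Sym3), exists_eq_right, enc_mem_A_iff]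
  constructor
  · rintro ⟨S, hcard, hcov⟩
    exact ⟨fun i => decide (i ∈ S), by simpa, by simpa using hcov⟩
  · rintro ⟨b, hcard, hcov⟩
    exact ⟨_, hcard, by simpa using hcov⟩
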